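/- Let n ≥ 1 be an integer, let f : [-1/2,1/2] → ℝ be convex, and set f_s(x) = (f(x)+f(−x))/2 − f(0). For integers j ≥ 1 with 2^{j-1} ≤ n define D_j = 2^{-(j-1)} Σ_{k=1}^{2^{j-1}} f_s(k/(2n)). Then for every integer j with j ≥ 1 and 2^j ≤ n one has 0 ≤ D_j ≤ ((2^{j-1}+1)/(2^j+1)) D_{j+1}. -/

import Mathlib

/-!
The centered even part `f_s` of a convex `f` is even, convex and zero at `0`, so it is nonnegative
and its secant slope `f_s x / x` from the origin is nondecreasing. Thus `a k = f_s (k / (2n))` has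
`a k / k` nondecreasing in `k`. With `M = 2^(j-1)` and `c = a M / M`, the first `M` terms sum to at
most `c M (M+1) / 2` and the next `M` terms to at least `c M (3M+1) / 2`; eliminating `c` gives
`2 (2M+1) ∑_{k ≤ M} a k ≤ (M+1) ∑_{k ≤ 2M} a k`, which is the growth bound for the averages `D j`.
-/

open Finset

theorem ConvexOn.comp_neg {𝕜 E β : Type*} [Ring 𝕜] [PartialOrder 𝕜] [AddCommGroup E]
    [Module 𝕜 E] [AddCommMonoid β] [PartialOrder β] [SMul 𝕜 β] {s : Set E} {f : E → β}
    (hf : ConvexOn 𝕜 s f) : ConvexOn 𝕜 (-s) (fun x => f (-x)) :=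
  ⟨hf.1.neg, fun x hx y hy a b ha hb hab => by
    simpa only [smul_neg, neg_add] using hf.2 hx hy ha hb hab⟩

noncomputable def centeredEvenPart (f : ℝ → ℝ) (x : ℝ) : ℝ := (f x + f (-x)) / 2 - f 0

@[simp]
theorem centeredEvenPart_zero (f : ℝ → ℝ) : centeredEvenPart f 0 = 0 := by
  simp [centeredEvenPart]

theorem convexOn_centeredEvenPart {f : ℝ → ℝ} {r : ℝ} (hf : ConvexOn ℝ (Set.Icc (-r) r) f) :
    ConvexOn ℝ (Set.Icc (-r) r) (centeredEvenPart f) := by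
  have hneg : ConvexOn ℝ (Set.Icc (-r) r) (fun x => f (-x)) := by
    simpa [Set.neg_Icc, add_comm] using hf.comp_neg
  refine (((hf.add hneg).smul (by norm_num : (0:ℝ) ≤ 1 / 2)).add_const (-f 0)).congr
    fun x _ => ?_
  simp only [Pi.add_apply, smul_eq_mul, centeredEvenPart]
  ring

theorem centeredEvenPart_nonneg {f : ℝ → ℝ} {r x : ℝ} (hf : ConvexOn ℝ (Set.Icc (-r) r) f)
    (hx : x ∈ Set.Icc (-r) r) : 0 ≤ centeredEvenPart f x := by
  have h := hf.2 hx (show -x ∈ Set.Icc (-r) r from ⟨neg_le_neg hx.2, by linarith [hx.1]⟩)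
    (by norm_num : (0:ℝ) ≤ 1 / 2) (by norm_num : (0:ℝ) ≤ 1 / 2) (by norm_num)
  simp only [smul_eq_mul, mul_neg, add_neg_cancel] at h
  simp only [centeredEvenPart]
  linarith

theorem ConvexOn.monotoneOn_div_self {g : ℝ → ℝ} {s : Set ℝ} (hg : ConvexOn ℝ s g) (h0 : 0 ∈ s)
    (hg0 : g 0 = 0) : MonotoneOn (fun x => g x / x) (s \ {0}) := by
  simpa [slope_fun_def_field, hg0] using hg.slope_mono h0

theorem sum_Icc_one_natCast (m : ℕ) : ∑ k ∈ Icc 1 m, (k : ℝ) = m * (m + 1) / 2 := by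
  induction m with
  | zero => simp
  | succ m ih =>
    rw [sum_Icc_succ_top (by omega), ih]
    push_cast
    ring

theorem sum_Icc_one_add_sum_Ioc {M : Type*} [AddCommMonoid M] (a : ℕ → M) {m n : ℕ}
    (h : m ≤ n) :
    ∑ k ∈ Icc 1 m, a k + ∑ k ∈ Ioc m n, a k = ∑ k ∈ Icc 1 n, a k := by
  have hIcc : ∀ k : ℕ, Icc 1 k = Ioc 0 k := fun k => Icc_add_one_left_eq_Ioc 0 k
  rw [hIcc, hIcc]
  exact sum_Ioc_consecutive a (Nat.zero_le m) h

theorem sum_Ioc_natCast_two_mul (m : ℕ) :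
    ∑ k ∈ Ioc m (2 * m), (k : ℝ) = m * (3 * m + 1) / 2 := by
  have := sum_Icc_one_add_sum_Ioc (fun k => (k : ℝ)) (by omega : m ≤ 2 * m)
  rw [sum_Icc_one_natCast, sum_Icc_one_natCast] at this
  push_cast at this
  linarith

theorem MonotoneOn.natCast_div_of_div_self {g : ℝ → ℝ} {s : Set ℝ} {t : ℝ} (ht : 0 < t)
    {N : ℕ} (hg : MonotoneOn (fun x => g x / x) s)
    (hs : Set.MapsTo (fun k : ℕ => (k : ℝ) / t) (Set.Icc 1 N) s) :
    MonotoneOn (fun k : ℕ => g (k / t) / k) (Set.Icc 1 N) := by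
  intro k hk l hl hkl
  have hrescale : ∀ m : ℕ, m ∈ Set.Icc 1 N → g (m / t) / m = g (m / t) / (m / t) / t := by
    intro m hm
    have : (m : ℝ) ≠ 0 := by have := hm.1; positivity
    field_simp
  simp only [hrescale k hk, hrescale l hl]
  exact div_le_div_of_nonneg_right
    (hg (hs hk) (hs hl) (div_le_div_of_nonneg_right (by exact_mod_cast hkl) ht.le)) ht.le

theorem two_mul_two_mul_add_one_mul_sum_Icc_le {a : ℕ → ℝ} {M : ℕ}
    (ha : MonotoneOn (fun k : ℕ => a k / k) (Set.Icc 1 (2 * M))) :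
    2 * (2 * M + 1) * ∑ k ∈ Icc 1 M, a k ≤ (M + 1) * ∑ k ∈ Icc 1 (2 * M), a k := by
  rcases M.eq_zero_or_pos with rfl | hM
  · simp
  set c := a M / M
  have hM_mem : M ∈ Set.Icc 1 (2 * M) := ⟨hM, by omega⟩
  have ha_eq : ∀ k : ℕ, 1 ≤ k → a k = k * (a k / k) := fun k hk => by
    have : (k : ℝ) ≠ 0 := by positivity
    field_simp
  have hlow : ∑ k ∈ Icc 1 M, a k ≤ M * (M + 1) / 2 * c := by
    rw [← sum_Icc_one_natCast, sum_mul]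
    refine sum_le_sum fun k hk => ?_
    obtain ⟨hk1, hkM⟩ := mem_Icc.mp hk
    rw [ha_eq k hk1]
    exact mul_le_mul_of_nonneg_left (ha ⟨hk1, by omega⟩ hM_mem hkM) (Nat.cast_nonneg k)
  have hhigh : M * (3 * M + 1) / 2 * c ≤ ∑ k ∈ Ioc M (2 * M), a k := by
    rw [← sum_Ioc_natCast_two_mul, sum_mul]
    refine sum_le_sum fun k hk => ?_
    obtain ⟨hMk, hk2M⟩ := mem_Ioc.mp hk
    rw [ha_eq k (by omega)]
    exact mul_le_mul_of_nonneg_left (ha hM_mem ⟨by omega, hk2M⟩ hMk.le) (Nat.cast_nonneg k)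
  rw [← sum_Icc_one_add_sum_Ioc a (by omega : M ≤ 2 * M)]
  have h3 : (0 : ℝ) ≤ 3 * M + 1 := by positivity
  have h1 : (0 : ℝ) ≤ M + 1 := by positivity
  linarith [mul_le_mul_of_nonneg_left hlow h3, mul_le_mul_of_nonneg_left hhigh h1]

theorem inv_mul_le_div_mul_inv_mul {x S₁ S₂ : ℝ} (hx : 0 < x)
    (h : 2 * (2 * x + 1) * S₁ ≤ (x + 1) * S₂) :
    x⁻¹ * S₁ ≤ (x + 1) / (2 * x + 1) * ((2 * x)⁻¹ * S₂) := by
  rw [show (x + 1) / (2 * x + 1) * ((2 * x)⁻¹ * S₂) = x⁻¹ * ((x + 1) * S₂ / (2 * (2 * x + 1))) by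
    field_simp]
  gcongr
  rwa [le_div_iff₀ (by positivity), mul_comm]

theorem mapsTo_natCast_div_two_mul (n : ℕ) :
    Set.MapsTo (fun k : ℕ => (k : ℝ) / (2 * n)) (Set.Icc 1 n)
      (Set.Icc (-(1 / 2)) (1 / 2) \ {0}) := by
  intro k ⟨hk1, hkn⟩
  have hk : (0 : ℝ) < k := by exact_mod_cast hk1
  have hkn : (k : ℝ) ≤ n := by exact_mod_cast hkn
  have h2n : (0 : ℝ) < 2 * n := by linarith
  refine ⟨⟨by linarith [div_pos hk h2n], ?_⟩, (div_pos hk h2n).ne'⟩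
  rw [div_le_iff₀ h2n]
  linarith

theorem two_zpow_one_sub_natCast_succ (m : ℕ) :
    (2 : ℝ) ^ (1 - ((m + 1 : ℕ) : ℤ)) = ((2 : ℝ) ^ m)⁻¹ := by
  rw [Nat.cast_succ, sub_add_eq_sub_sub_swap, sub_self, zero_sub, zpow_neg, zpow_natCast]

theorem regression_bias_nonneg_and_growth
    (n : ℕ)
    (f : ℝ → ℝ) (hf : ConvexOn ℝ (Set.Icc (-(1:ℝ)/2) (1/2)) f)
    (fs : ℝ → ℝ) (hfs : ∀ x : ℝ, fs x = (f x + f (-x))/2 - f 0)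
    (D : ℕ → ℝ)
    (hD : ∀ j : ℕ, 1 ≤ j → 2 ^ (j - 1) ≤ n →
      D j = (2:ℝ) ^ (1 - (j:ℤ)) * ∑ k ∈ Finset.Icc (1:ℕ) (2 ^ (j - 1)), fs ((k:ℝ)/(2*(n:ℝ)))) :
    ∀ j : ℕ, 1 ≤ j → 2 ^ j ≤ n →
      0 ≤ D j ∧ D j ≤ (((2:ℝ) ^ (j - 1) + 1)/((2:ℝ) ^ j + 1)) * D (j + 1) := by
  intro j hj hjn
  obtain ⟨i, rfl⟩ : ∃ i, j = i + 1 := ⟨j - 1, by omega⟩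
  rw [neg_div] at hf
  obtain rfl : fs = centeredEvenPart f := funext hfs
  have hMn : 2 * 2 ^ i ≤ n := by rwa [← pow_succ']
  have hmem := mapsTo_natCast_div_two_mul n
  have hnonneg : 0 ≤ ∑ k ∈ Icc 1 (2 ^ i), centeredEvenPart f ((k : ℕ) / (2 * n)) :=
    sum_nonneg fun k hk => centeredEvenPart_nonneg hf (hmem ⟨(mem_Icc.mp hk).1, by
      have := (mem_Icc.mp hk).2; omega⟩).1
  have hdoubling := two_mul_two_mul_add_one_mul_sum_Icc_le
    (((convexOn_centeredEvenPart hf).monotoneOn_div_self (by norm_num) (centeredEvenPart_zero f)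
      |>.natCast_div_of_div_self (by have := (Nat.two_pow_pos _).trans_le hjn; positivity) hmem)
      |>.mono (Set.Icc_subset_Icc_right hMn))
  rw [hD (i + 1) (by omega) (by rw [Nat.add_sub_cancel]; omega),
    hD (i + 1 + 1) (by omega) (by rwa [Nat.add_sub_cancel]), Nat.add_sub_cancel,
    Nat.add_sub_cancel, two_zpow_one_sub_natCast_succ, two_zpow_one_sub_natCast_succ,
    pow_succ' (2 : ℕ), pow_succ' (2 : ℝ)]
  push_cast at hdoubling
  exact ⟨mul_nonneg (by positivity) hnonneg, inv_mul_le_div_mul_inv_mul (by positivity) hdoubling⟩
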